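/- arXiv:0810.5604 — 6 statements merged into one kernel-verified Lean document; each statement's English description precedes it below -/
import Mathlib

section
/- If u ∈ C(M,ℝ) lies in the kernel of P, satisfies ∫_M u·Q dμ = 0, and u is not identically zero, then there is no ω ∈ C(M,ℝ) with Q_ω = u. (Nonzero elements of 𝒩(𝒬) are forbidden functions for the Q-prescription problem.) -/
open MeasureTheory

variable {M : Type*} [TopologicalSpace M] [MeasurableSpace M]

/-- The transformed Q-curvature `Q_ω = e^{-nω}(Q + Pω)`. -/
noncomputable def Qcurv (n : ℝ) (P : C(M, ℝ) →ₗ[ℝ] C(M, ℝ)) (Q ω : C(M, ℝ)) : C(M, ℝ) :=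
  ⟨fun x => Real.exp (-n * ω x) * (Q x + P ω x),
    (Real.continuous_exp.comp (continuous_const.mul ω.continuous)).mul
      (Q.continuous.add (P ω).continuous)⟩

/-- The conformally rescaled measure `μ_ω`, with density `e^{nω}` w.r.t. `μ`. -/
noncomputable def confMeasure (μ : Measure M) (n : ℝ) (ω : C(M, ℝ)) : Measure M :=
  μ.withDensity fun x => ENNReal.ofReal (Real.exp (n * ω x))

/-- `𝒩(𝒬) = {u ∈ ker P : ∫ u·Q dμ = 0}`. -/
def NQ (μ : Measure M) (P : C(M, ℝ) →ₗ[ℝ] C(M, ℝ)) (Q : C(M, ℝ)) : Set C(M, ℝ) :=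
  {u | P u = 0 ∧ ∫ x, u x * Q x ∂μ = 0}

/-- `ℱ = ⋂_ω ℱ^ω`, where `ℱ^ω` is the set of `f` not `L²(μ_ω)`-orthogonal to `𝒩(𝒬)`. -/
def Fcal (μ : Measure M) (n : ℝ) (P : C(M, ℝ) →ₗ[ℝ] C(M, ℝ)) (Q : C(M, ℝ)) : Set C(M, ℝ) :=
  {f | ∀ ω : C(M, ℝ), ∃ u ∈ NQ μ P Q, ∫ x, f x * u x ∂(confMeasure μ n ω) ≠ 0}

variable [BorelSpace M] [CompactSpace M] [ConnectedSpace M]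
variable (μ : Measure M) [IsFiniteMeasure μ] [Measure.IsOpenPosMeasure μ]
variable (n : ℝ) (P : C(M, ℝ) →ₗ[ℝ] C(M, ℝ)) (Q : C(M, ℝ))


theorem stmt1
    (hn : 0 < n)
    (hPc : ∀ c : ℝ, P (ContinuousMap.const M c) = 0)
    (hPsa : ∀ u v : C(M, ℝ), ∫ x, u x * P v x ∂μ = ∫ x, P u x * v x ∂μ)
    (u : C(M, ℝ)) (hu : u ∈ NQ μ P Q) (hne : u ≠ 0) :
    ¬ ∃ ω : C(M, ℝ), Qcurv n P Q ω = u := by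
  rintro ⟨ω, hω⟩
  obtain ⟨hPu, hQu⟩ := hu
  have hInt : ∀ f : C(M, ℝ), Integrable (fun x => f x) μ := fun f =>
    f.continuous.integrable_of_hasCompactSupport (HasCompactSupport.of_compactSpace _)
  have key : ∀ x, Q x + P ω x = Real.exp (n * ω x) * u x := by
    intro x
    have h := congrArg (fun f : C(M, ℝ) => f x) hω
    simp only [Qcurv, ContinuousMap.coe_mk] at h
    have h2 : Real.exp (n * ω x) * (Real.exp (-n * ω x) * (Q x + P ω x))
        = Real.exp (n * ω x) * u x := by rw [h]
    rw [← mul_assoc, ← Real.exp_add] at h2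
    simpa using h2
  have hint1 : Integrable (fun x => u x * Q x) μ := by
    simpa using hInt (u * Q)
  have hint2 : Integrable (fun x => u x * P ω x) μ := by
    simpa using hInt (u * P ω)
  have hsum : ∫ x, u x * (Q x + P ω x) ∂μ = 0 := by
    have : ∫ x, u x * (Q x + P ω x) ∂μ
        = ∫ x, (u x * Q x + u x * P ω x) ∂μ := by
      congr 1; ext x; ring
    rw [this, integral_add hint1 hint2, hQu, hPsa u ω, hPu]
    simp
  have hzero : ∫ x, (u x) ^ 2 * Real.exp (n * ω x) ∂μ = 0 := by
    rw [← hsum]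
    congr 1; ext x; rw [key x]; ring
  have hnonneg : 0 ≤ fun x => (u x) ^ 2 * Real.exp (n * ω x) := fun x =>
    mul_nonneg (sq_nonneg _) (Real.exp_pos _).le
  have hintg : Integrable (fun x => (u x) ^ 2 * Real.exp (n * ω x)) μ := by
    have hc : Continuous fun x => (u x) ^ 2 * Real.exp (n * ω x) :=
      (u.continuous.pow 2).mul (Real.continuous_exp.comp (continuous_const.mul ω.continuous))
    exact hc.integrable_of_hasCompactSupport (HasCompactSupport.of_compactSpace _)
  have hae := (integral_eq_zero_iff_of_nonneg hnonneg hintg).mp hzero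
  have heq : (fun x => (u x) ^ 2 * Real.exp (n * ω x)) = fun _ => (0 : ℝ) := by
    refine Measure.eq_of_ae_eq hae ?_ continuous_const
    exact (u.continuous.pow 2).mul (Real.continuous_exp.comp (continuous_const.mul ω.continuous))
  apply hne
  ext x
  have hx := congrFun heq x
  have : (u x) ^ 2 = 0 := by
    have hexp := (Real.exp_pos (n * ω x)).ne'
    rcases mul_eq_zero.mp hx with h | h
    · exact h
    · exact absurd h hexp
  simpa using pow_eq_zero_iff (n := 2) (by norm_num) |>.mp this
end

section
/- If the kernel of P contains a non-constant function, then there exists a not-identically-zero u ∈ ker P such that for no pair (ω ∈ C(M,ℝ), α ∈ ℝ with α ≠ 0) does one have Q_ω = α·u. (First statement of Theorem 1.1.) -/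
open MeasureTheory
open scoped NNReal ENNReal

variable {M : Type*} [TopologicalSpace M] [MeasurableSpace M]

variable [BorelSpace M] [CompactSpace M] [ConnectedSpace M]
variable (μ : Measure M) [IsFiniteMeasure μ] [Measure.IsOpenPosMeasure μ]
variable (n : ℝ) (P : C(M, ℝ) →ₗ[ℝ] C(M, ℝ)) (Q : C(M, ℝ))

/-- A continuous function on a compact space with a finite measure is integrable. -/
lemma cont_integrable (μ : Measure M) [IsFiniteMeasure μ] {f : M → ℝ} (hf : Continuous f) :
    Integrable f μ :=
  hf.integrable_of_hasCompactSupport (HasCompactSupport.of_compactSpace f)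

/-- Integration against the conformal measure as a weighted integral. -/
lemma integral_confMeasure (μ : Measure M) (n : ℝ) (ω : C(M, ℝ)) (g : M → ℝ) :
    ∫ x, g x ∂(confMeasure μ n ω) = ∫ x, Real.exp (n * ω x) * g x ∂μ := by
  have hmeas : Measurable fun x => Real.toNNReal (Real.exp (n * ω x)) :=
    (Real.continuous_exp.comp (continuous_const.mul ω.continuous)).measurable.real_toNNReal
  have h : confMeasure μ n ω
      = μ.withDensity fun x => ((Real.toNNReal (Real.exp (n * ω x)) : ℝ≥0) : ℝ≥0∞) := rfl
  rw [h, integral_withDensity_eq_integral_smul hmeas]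
  refine integral_congr_ae (Filter.Eventually.of_forall fun x => ?_)
  simp [NNReal.smul_def, Real.coe_toNNReal _ (Real.exp_pos _).le]

theorem stmt3
    (hn : 0 < n)
    (hPc : ∀ c : ℝ, P (ContinuousMap.const M c) = 0)
    (hPsa : ∀ u v : C(M, ℝ), ∫ x, u x * P v x ∂μ = ∫ x, P u x * v x ∂μ)
    (hker : ∃ v : C(M, ℝ), P v = 0 ∧ ∀ c : ℝ, v ≠ ContinuousMap.const M c) :
    ∃ u : C(M, ℝ), u ≠ 0 ∧ P u = 0 ∧
      ∀ (ω : C(M, ℝ)) (α : ℝ), α ≠ 0 → Qcurv n P Q ω ≠ α • u := by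
  obtain ⟨v, hvP, hvnc⟩ := hker
  -- the linear functional L u = ∫ u Q dμ
  set L : C(M, ℝ) → ℝ := fun w => ∫ x, w x * Q x ∂μ with hL
  -- Main step: any u ≠ 0 with P u = 0 and L u = 0 works.
  have main : ∀ u : C(M, ℝ), u ≠ 0 → P u = 0 → L u = 0 →
      ∀ (ω : C(M, ℝ)) (α : ℝ), α ≠ 0 → Qcurv n P Q ω ≠ α • u := by
    intro u hu0 hPu hLu ω α hα heq
    -- compute ∫ u · Q_ω dμ_ω = L u + ∫ u Pω dμ = 0
    have h1 : ∫ x, u x * Qcurv n P Q ω x ∂(confMeasure μ n ω)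
        = ∫ x, u x * (Q x + P ω x) ∂μ := by
      rw [integral_confMeasure]
      refine integral_congr_ae (Filter.Eventually.of_forall fun x => ?_)
      show Real.exp (n * ω x) * (u x * (Real.exp (-n * ω x) * (Q x + P ω x))) = _
      rw [show (-n * ω x) = -(n * ω x) by ring, Real.exp_neg]
      field_simp
    have hQint : Integrable (fun x => u x * Q x) μ :=
      cont_integrable μ (u.continuous.mul Q.continuous)
    have hPint : Integrable (fun x => u x * P ω x) μ :=
      cont_integrable μ (u.continuous.mul (P ω).continuous)
    have h2 : ∫ x, u x * (Q x + P ω x) ∂μ = 0 := by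
      have hsplit : ∫ x, u x * (Q x + P ω x) ∂μ
          = (∫ x, u x * Q x ∂μ) + ∫ x, u x * P ω x ∂μ := by
        rw [← integral_add hQint hPint]
        refine integral_congr_ae (Filter.Eventually.of_forall fun x => ?_)
        ring
      have hsa : ∫ x, u x * P ω x ∂μ = 0 := by
        rw [hPsa u ω]
        have : ∀ x, P u x * ω x = 0 := by
          intro x; rw [hPu]; simp
        simp [this]
      rw [hsplit, hsa, add_zero]
      exact hLu
    -- on the other hand it equals α * ∫ e^{nω} u² dμ > 0 in absolute value
    have h3 : ∫ x, u x * Qcurv n P Q ω x ∂(confMeasure μ n ω)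
        = α * ∫ x, Real.exp (n * ω x) * (u x * u x) ∂μ := by
      rw [heq, integral_confMeasure, ← integral_const_mul]
      refine integral_congr_ae (Filter.Eventually.of_forall fun x => ?_)
      show Real.exp (n * ω x) * (u x * (α • u) x) = _
      simp only [ContinuousMap.smul_apply, smul_eq_mul]
      ring
    have hpos : 0 < ∫ x, Real.exp (n * ω x) * (u x * u x) ∂μ := by
      have hfc : Continuous fun x => Real.exp (n * ω x) * (u x * u x) :=
        (Real.continuous_exp.comp (continuous_const.mul ω.continuous)).mul
          (u.continuous.mul u.continuous)
      have hnn : 0 ≤ fun x => Real.exp (n * ω x) * (u x * u x) := by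
        intro x
        exact mul_nonneg (Real.exp_pos _).le (mul_self_nonneg _)
      rw [integral_pos_iff_support_of_nonneg hnn (cont_integrable μ hfc)]
      have hopen : IsOpen (Function.support fun x => Real.exp (n * ω x) * (u x * u x)) :=
        hfc.isOpen_support
      refine hopen.measure_pos μ ?_
      obtain ⟨x, hx⟩ : ∃ x, u x ≠ 0 := by
        by_contra h
        push_neg at h
        exact hu0 (ContinuousMap.ext fun x => by simp [h x])
      exact ⟨x, by
        simp only [Function.mem_support]
        exact mul_ne_zero (Real.exp_pos _).ne' (mul_ne_zero hx hx)⟩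
    rw [h1, h2] at h3
    exact hα (by
      rcases mul_eq_zero.mp h3.symm with h | h
      · exact h
      · exact absurd h hpos.ne')
  -- Now construct u.
  by_cases h1 : L (ContinuousMap.const M 1) = 0
  · by_cases hv : L v = 0
    · refine ⟨v, ?_, hvP, main v ?_ hvP hv⟩ <;>
      · intro h
        exact hvnc 0 (by rw [h]; ext x; simp)
    · refine ⟨ContinuousMap.const M 1, ?_, hPc 1, main _ ?_ (hPc 1) h1⟩ <;>
      · intro h
        obtain ⟨x⟩ : Nonempty M := inferInstance
        have := ContinuousMap.congr_fun h x
        simp at this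
  · -- L 1 ≠ 0 : take u = v - (L v / L 1) • 1
    set c : ℝ := L v / L (ContinuousMap.const M 1) with hc
    set u : C(M, ℝ) := v - c • ContinuousMap.const M 1 with hu
    have hPu : P u = 0 := by
      rw [hu, map_sub, _root_.map_smul, hvP, hPc]
      simp
    have hLu : L u = 0 := by
      have hint1 : Integrable (fun x => v x * Q x) μ :=
        cont_integrable μ (v.continuous.mul Q.continuous)
      have hint2 : Integrable (fun x => c * (1 * Q x)) μ := by
        refine Integrable.const_mul ?_ c
        exact cont_integrable μ (continuous_const.mul Q.continuous)
      have key : L u = L v - c * L (ContinuousMap.const M 1) := by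
        simp only [hL, hu]
        have hpt : ∀ x, ((v - c • ContinuousMap.const M 1 : C(M, ℝ)) : M → ℝ) x * Q x
            = v x * Q x - c * (1 * Q x) := by
          intro x
          simp only [ContinuousMap.sub_apply, ContinuousMap.smul_apply,
            ContinuousMap.const_apply, smul_eq_mul]
          ring
        rw [integral_congr_ae (Filter.Eventually.of_forall hpt),
          integral_sub hint1 hint2, integral_const_mul]
        simp
      rw [key, hc, div_mul_cancel₀ _ h1, sub_self]
    have hu0 : u ≠ 0 := by
      intro h
      refine hvnc c ?_
      have : v = c • ContinuousMap.const M 1 := by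
        have := sub_eq_zero.mp (hu ▸ h)
        exact this
      rw [this]; ext x; simp
    exact ⟨u, hu0, hPu, main u hu0 hPu hLu⟩
end

section
/- Suppose 𝒩(𝒬) contains a non-constant function and the real vector space ker P is finite-dimensional. Then the containment 𝒩(𝒬) \ {0} ⊆ ℱ is proper (there exists f ∈ ℱ with f ∉ 𝒩(𝒬) \ {0}), and the linear span of ℱ in C(M,ℝ) is infinite-dimensional. (Proposition 2.4; the proof uses that the odd powers u^p of a non-constant u ∈ 𝒩(𝒬) all lie in ℱ and are linearly independent.) -/
open MeasureTheory

variable {M : Type*} [TopologicalSpace M] [MeasurableSpace M]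

variable [BorelSpace M] [CompactSpace M] [ConnectedSpace M]
variable (μ : Measure M) [IsFiniteMeasure μ] [Measure.IsOpenPosMeasure μ]
variable (n : ℝ) (P : C(M, ℝ) →ₗ[ℝ] C(M, ℝ)) (Q : C(M, ℝ))


theorem stmt7
    (hn : 0 < n)
    (hPc : ∀ c : ℝ, P (ContinuousMap.const M c) = 0)
    (hPsa : ∀ u v : C(M, ℝ), ∫ x, u x * P v x ∂μ = ∫ x, P u x * v x ∂μ)
    (hnc : ∃ u ∈ NQ μ P Q, ∀ c : ℝ, u ≠ ContinuousMap.const M c)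
    (hfd : FiniteDimensional ℝ (LinearMap.ker P)) :
    (∃ f ∈ Fcal μ n P Q, f ∉ NQ μ P Q \ {0}) ∧
      ¬ FiniteDimensional ℝ (Submodule.span ℝ (Fcal μ n P Q)) := by
  classical
  obtain ⟨u, huNQ, hu_ne⟩ := hnc
  -- u is nonzero at some point
  have hu0 : u ≠ 0 := by
    intro h
    exact hu_ne 0 (by ext x; simp [h])
  obtain ⟨x1, hx1⟩ : ∃ x, u x ≠ 0 := by
    by_contra h
    push_neg at h
    exact hu0 (by ext x; simp [h x])
  -- u is nonconstant, hence its range is infinite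
  have hne2 : ∃ a b : M, u a < u b := by
    have := ConnectedSpace.toNonempty (α := M)
    obtain ⟨x0⟩ := this
    have : ∃ y, u y ≠ u x0 := by
      by_contra h
      push_neg at h
      exact hu_ne (u x0) (by ext x; simp [h x])
    obtain ⟨y, hy⟩ := this
    rcases lt_or_gt_of_ne hy with h | h
    · exact ⟨y, x0, h⟩
    · exact ⟨x0, y, h⟩
  obtain ⟨a, b, hab⟩ := hne2
  have hrange_inf : (Set.range u).Infinite := by
    have hconn : IsPreconnected (Set.range u) := by
      rw [← Set.image_univ]
      exact isPreconnected_univ.image u u.continuous.continuousOn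
    have hsub : Set.Icc (u a) (u b) ⊆ Set.range u :=
      hconn.Icc_subset ⟨a, rfl⟩ ⟨b, rfl⟩
    exact (Set.Icc_infinite hab).mono hsub
  -- the family of odd powers of u
  set F : ℕ → C(M, ℝ) := fun k => u ^ (2 * k + 1) with hF
  -- measure-theoretic facts about confMeasure
  have hmeas : ∀ ω : C(M, ℝ),
      Measurable fun x => ENNReal.ofReal (Real.exp (n * ω x)) := fun ω =>
    (ENNReal.continuous_ofReal.comp
      (Real.continuous_exp.comp (continuous_const.mul ω.continuous))).measurable
  have hfin : ∀ ω : C(M, ℝ), IsFiniteMeasure (confMeasure μ n ω) := by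
    intro ω
    obtain ⟨z, -, hz⟩ := isCompact_univ.exists_isMaxOn Set.univ_nonempty
      (Real.continuous_exp.comp (continuous_const.mul ω.continuous)).continuousOn
    refine isFiniteMeasure_withDensity (ne_of_lt ?_)
    calc ∫⁻ x, ENNReal.ofReal (Real.exp (n * ω x)) ∂μ
        ≤ ∫⁻ _, ENNReal.ofReal (Real.exp (n * ω z)) ∂μ := by
          exact lintegral_mono fun x => ENNReal.ofReal_le_ofReal (hz (Set.mem_univ x))
      _ = ENNReal.ofReal (Real.exp (n * ω z)) * μ Set.univ := lintegral_const _
      _ < ⊤ := ENNReal.mul_lt_top ENNReal.ofReal_lt_top (measure_lt_top μ _)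
  have hpos : ∀ ω : C(M, ℝ), (confMeasure μ n ω).IsOpenPosMeasure := by
    intro ω
    have hac : μ ≪ confMeasure μ n ω :=
      withDensity_absolutelyContinuous' (hmeas ω).aemeasurable
        (Filter.Eventually.of_forall fun x =>
          (ENNReal.ofReal_pos.2 (Real.exp_pos _)).ne')
    exact hac.isOpenPosMeasure
  -- each F k belongs to Fcal
  have hFmem : ∀ k, F k ∈ Fcal μ n P Q := by
    intro k ω
    refine ⟨u, huNQ, ?_⟩
    haveI := hfin ω
    haveI := hpos ω
    have heq : (fun x => (F k) x * u x) = fun x => ((u x) ^ (k + 1)) ^ 2 := by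
      funext x
      simp only [hF, ContinuousMap.coe_pow, Pi.pow_apply]
      rw [← pow_succ, ← pow_mul]
      congr 1
      ring
    have hcont : Continuous fun x => ((u x) ^ (k + 1)) ^ 2 := by
      continuity
    have hint : Integrable (fun x => ((u x) ^ (k + 1)) ^ 2) (confMeasure μ n ω) :=
      hcont.integrable_of_hasCompactSupport (HasCompactSupport.of_compactSpace _)
    have h0 : 0 < ∫ x, ((u x) ^ (k + 1)) ^ 2 ∂(confMeasure μ n ω) := by
      rw [integral_pos_iff_support_of_nonneg (fun x => sq_nonneg _) hint]
      refine (hcont.isOpen_support).measure_pos (confMeasure μ n ω) ⟨x1, ?_⟩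
      simp only [Function.mem_support]
      positivity
    rw [heq]
    exact h0.ne'
  -- the family F is linearly independent
  have hFli : LinearIndependent ℝ F := by
    rw [linearIndependent_iff']
    intro s g hsum i hi
    set p : Polynomial ℝ := ∑ j ∈ s, Polynomial.monomial (2 * j + 1) (g j) with hp
    have hroot : ∀ x : M, p.eval (u x) = 0 := by
      intro x
      have hx := DFunLike.congr_fun hsum x
      simp only [ContinuousMap.coe_sum, Finset.sum_apply, ContinuousMap.coe_smul,
        Pi.smul_apply, ContinuousMap.coe_pow, Pi.pow_apply, smul_eq_mul,
        ContinuousMap.coe_zero, Pi.zero_apply, hF] at hx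
      simp only [hp, Polynomial.eval_finset_sum, Polynomial.eval_monomial]
      exact hx
    have hp0 : p = 0 := by
      refine Polynomial.eq_zero_of_infinite_isRoot p (hrange_inf.mono ?_)
      rintro t ⟨x, rfl⟩
      exact hroot x
    have hcoeff : p.coeff (2 * i + 1) = g i := by
      rw [hp, Polynomial.finset_sum_coeff]
      rw [Finset.sum_eq_single_of_mem i hi]
      · simp [Polynomial.coeff_monomial]
      · intro j _ hj
        rw [Polynomial.coeff_monomial, if_neg (by omega)]
    rw [hp0] at hcoeff
    simpa using hcoeff.symm
  -- an infinite linearly independent family cannot live in a finite-dim. module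
  have hnotall : ¬ ∀ k, F k ∈ LinearMap.ker P := by
    intro h
    have hli : LinearIndependent ℝ fun k => (⟨F k, h k⟩ : LinearMap.ker P) :=
      LinearIndependent.of_comp (LinearMap.ker P).subtype hFli
    have : Finite ℕ := hli.finite
    exact not_finite ℕ
  constructor
  · -- part 1: some F k is in Fcal but not in NQ \ {0}
    have : ∃ k, F k ∉ NQ μ P Q := by
      by_contra h
      push_neg at h
      exact hnotall fun k => (h k).1
    obtain ⟨k, hk⟩ := this
    exact ⟨F k, hFmem k, fun h => hk h.1⟩
  · -- part 2: span of Fcal is infinite-dimensional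
    intro hFD
    have hli : LinearIndependent ℝ fun k =>
        (⟨F k, Submodule.subset_span (hFmem k)⟩ : Submodule.span ℝ (Fcal μ n P Q)) :=
      LinearIndependent.of_comp (Submodule.span ℝ (Fcal μ n P Q)).subtype hFli
    have : Finite ℕ := hli.finite
    exact not_finite ℕ
end

section
/- Let u ∈ 𝒩(𝒬) with u not identically zero, and let f : ℝ → ℝ be a continuous function having the same strict sign as the identity, i.e. f(0) = 0 and t·f(t) > 0 for all t ≠ 0. Then the composite f ∘ u belongs to ℱ. -/
open MeasureTheory

variable {M : Type*} [TopologicalSpace M] [MeasurableSpace M]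

variable [BorelSpace M] [CompactSpace M] [ConnectedSpace M]
variable (μ : Measure M) [IsFiniteMeasure μ] [Measure.IsOpenPosMeasure μ]
variable (n : ℝ) (P : C(M, ℝ) →ₗ[ℝ] C(M, ℝ)) (Q : C(M, ℝ))


theorem stmt8
    (hn : 0 < n)
    (hPc : ∀ c : ℝ, P (ContinuousMap.const M c) = 0)
    (hPsa : ∀ u v : C(M, ℝ), ∫ x, u x * P v x ∂μ = ∫ x, P u x * v x ∂μ)
    (u : C(M, ℝ)) (hu : u ∈ NQ μ P Q) (hne : u ≠ 0)
    (f : ℝ → ℝ) (hf : Continuous f) (hf0 : f 0 = 0)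
    (hsign : ∀ t : ℝ, t ≠ 0 → 0 < t * f t) :
    ContinuousMap.comp ⟨f, hf⟩ u ∈ Fcal μ n P Q := by
  intro ω
  refine ⟨u, hu, ?_⟩
  -- rewrite the integral over the conformal measure
  have hd : Measurable fun x => (Real.exp (n * ω x)).toNNReal :=
    (Real.continuous_exp.comp (continuous_const.mul ω.continuous)).measurable.real_toNNReal
  have hrw : ∫ x, f (u x) * u x ∂(confMeasure μ n ω)
      = ∫ x, Real.exp (n * ω x) * (f (u x) * u x) ∂μ := by
    have := integral_withDensity_eq_integral_smul (μ:=μ) hd (fun x => f (u x) * u x)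
    simp only [NNReal.smul_def, smul_eq_mul] at this
    simpa [confMeasure, ENNReal.ofReal, Real.coe_toNNReal _ (Real.exp_pos _).le] using this
  have hg : Continuous fun x => Real.exp (n * ω x) * (f (u x) * u x) :=
    (Real.continuous_exp.comp (continuous_const.mul ω.continuous)).mul
      ((hf.comp u.continuous).mul u.continuous)
  have hnonneg : ∀ x, 0 ≤ Real.exp (n * ω x) * (f (u x) * u x) := by
    intro x
    rcases eq_or_ne (u x) 0 with h | h
    · simp [h, hf0]
    · exact le_of_lt (mul_pos (Real.exp_pos _)
        (by have := hsign (u x) h; linarith [hsign (u x) h] ))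
  have hint : Integrable (fun x => Real.exp (n * ω x) * (f (u x) * u x)) μ :=
    hg.integrable_of_hasCompactSupport (HasCompactSupport.of_compactSpace _)
  -- the integrand is positive somewhere
  obtain ⟨x0, hx0⟩ : ∃ x, u x ≠ 0 := by
    by_contra h
    push_neg at h
    exact hne (ContinuousMap.ext fun x => h x)
  have hpos : 0 < ∫ x, Real.exp (n * ω x) * (f (u x) * u x) ∂μ := by
    rw [(integral_pos_iff_support_of_nonneg hnonneg hint)]
    have hopen : IsOpen (Function.support fun x => Real.exp (n * ω x) * (f (u x) * u x)) :=
      hg.isOpen_support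
    refine hopen.measure_pos μ ⟨x0, ?_⟩
    have : 0 < Real.exp (n * ω x0) * (f (u x0) * u x0) :=
      mul_pos (Real.exp_pos _) (by have := hsign (u x0) hx0; linarith)
    intro h
    simp only [Function.mem_support, not_not] at h
    rw [h] at this
    exact lt_irrefl 0 this
  simp only [ContinuousMap.comp_apply, ContinuousMap.coe_mk]
  rw [hrw]
  exact ne_of_gt hpos
end

section
/- Suppose k_Q := ∫_M Q dμ > 0 (alternatively k_Q < 0). Then no function in ℰ₋ ∪ ℱ ∪ {0} (resp. ℰ₊ ∪ ℱ ∪ {0}) is in the range of the Q-map; that is, for every f in that set there is no ω ∈ C(M,ℝ) with Q_ω = f. (Proposition 3.3.) -/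
open MeasureTheory
open scoped NNReal ENNReal

variable {M : Type*} [TopologicalSpace M] [MeasurableSpace M]

variable [BorelSpace M] [CompactSpace M] [ConnectedSpace M]
variable (μ : Measure M) [IsFiniteMeasure μ] [Measure.IsOpenPosMeasure μ]
variable (n : ℝ) (P : C(M, ℝ) →ₗ[ℝ] C(M, ℝ)) (Q : C(M, ℝ))

lemma cont_integrable_aux (g : M → ℝ) (hg : Continuous g) : Integrable g μ :=
  hg.integrable_of_hasCompactSupport (HasCompactSupport.of_compactSpace g)

/-- Integral against the conformal measure. -/
lemma confMeasure_integral (ω : C(M, ℝ)) (g : M → ℝ) :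
    ∫ x, g x ∂(confMeasure μ n ω) = ∫ x, Real.exp (n * ω x) * g x ∂μ := by
  have hmeas : Measurable fun x => (Real.exp (n * ω x)).toNNReal :=
    (measurable_real_toNNReal.comp
      ((Real.continuous_exp.comp (continuous_const.mul ω.continuous)).measurable))
  have : confMeasure μ n ω = μ.withDensity fun x => ((Real.exp (n * ω x)).toNNReal : ℝ≥0∞) := rfl
  rw [this, integral_withDensity_eq_integral_smul hmeas]
  congr 1
  ext x
  simp [NNReal.smul_def, Real.coe_toNNReal _ (Real.exp_pos _).le]

/-- Key identity: if `Q_ω = f` and `P u = 0`, then `∫ f u dμ_ω = ∫ u Q dμ`. -/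
lemma key_identity
    (hPsa : ∀ u v : C(M, ℝ), ∫ x, u x * P v x ∂μ = ∫ x, P u x * v x ∂μ)
    (ω u : C(M, ℝ)) (hu : P u = 0) (f : C(M, ℝ)) (hf : Qcurv n P Q ω = f) :
    ∫ x, f x * u x ∂(confMeasure μ n ω) = ∫ x, u x * Q x ∂μ := by
  rw [confMeasure_integral]
  have hval : ∀ x, Real.exp (n * ω x) * (f x * u x) = u x * Q x + u x * P ω x := by
    intro x
    rw [← hf]
    show Real.exp (n * ω x) * (Real.exp (-n * ω x) * (Q x + P ω x) * u x) = _
    rw [show (-n * ω x) = -(n * ω x) by ring, Real.exp_neg]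
    field_simp [(Real.exp_pos (n * ω x)).ne']
  have h1 : Integrable (fun x => u x * Q x) μ :=
    cont_integrable_aux μ _ (u.continuous.mul Q.continuous)
  have h2 : Integrable (fun x => u x * P ω x) μ :=
    cont_integrable_aux μ _ (u.continuous.mul (P ω).continuous)
  calc ∫ x, Real.exp (n * ω x) * (f x * u x) ∂μ
      = ∫ x, (u x * Q x + u x * P ω x) ∂μ := by
        exact integral_congr_ae (Filter.Eventually.of_forall hval)
    _ = (∫ x, u x * Q x ∂μ) + ∫ x, u x * P ω x ∂μ := integral_add h1 h2
    _ = ∫ x, u x * Q x ∂μ := by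
        rw [hPsa u ω, hu]
        simp

theorem stmt12
    (hn : 0 < n)
    (hPc : ∀ c : ℝ, P (ContinuousMap.const M c) = 0)
    (hPsa : ∀ u v : C(M, ℝ), ∫ x, u x * P v x ∂μ = ∫ x, P u x * v x ∂μ) :
    ((0 < ∫ x, Q x ∂μ) →
      ∀ f : C(M, ℝ), ((f ≠ 0 ∧ ∀ x, f x ≤ 0) ∨ f ∈ Fcal μ n P Q ∨ f = 0) →
        ¬ ∃ ω : C(M, ℝ), Qcurv n P Q ω = f) ∧
    ((∫ x, Q x ∂μ < 0) →
      ∀ f : C(M, ℝ), ((f ≠ 0 ∧ ∀ x, 0 ≤ f x) ∨ f ∈ Fcal μ n P Q ∨ f = 0) →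
        ¬ ∃ ω : C(M, ℝ), Qcurv n P Q ω = f) := by
  -- Basic: for any ω with Q_ω = f we have ∫ e^{nω} f dμ = ∫ Q dμ
  have hone : ∀ (ω f : C(M, ℝ)), Qcurv n P Q ω = f →
      ∫ x, f x * (1 : C(M, ℝ)) x ∂(confMeasure μ n ω) = ∫ x, Q x ∂μ := by
    intro ω f hf
    have h1 : P (1 : C(M, ℝ)) = 0 := hPc 1
    rw [key_identity μ n P Q hPsa ω 1 h1 f hf]
    simp
  have hone' : ∀ (ω f : C(M, ℝ)), Qcurv n P Q ω = f →
      ∫ x, Real.exp (n * ω x) * f x ∂μ = ∫ x, Q x ∂μ := by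
    intro ω f hf
    have := hone ω f hf
    rw [confMeasure_integral] at this
    simpa using this
  have hFcal : ∀ f ∈ Fcal μ n P Q, ¬ ∃ ω : C(M, ℝ), Qcurv n P Q ω = f := by
    intro f hf ⟨ω, hω⟩
    obtain ⟨u, ⟨hu1, hu2⟩, hne⟩ := hf ω
    exact hne ((key_identity μ n P Q hPsa ω u hu1 f hω).trans hu2)
  constructor
  · intro hQ f hcase ⟨ω, hω⟩
    rcases hcase with ⟨_, hle⟩ | hF | rfl
    · have := hone' ω f hω
      have hnp : ∫ x, Real.exp (n * ω x) * f x ∂μ ≤ 0 :=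
        integral_nonpos fun x => mul_nonpos_of_nonneg_of_nonpos (Real.exp_pos _).le (hle x)
      linarith
    · exact hFcal f hF ⟨ω, hω⟩
    · have := hone' ω 0 hω
      simp at this
      linarith
  · intro hQ f hcase ⟨ω, hω⟩
    rcases hcase with ⟨_, hle⟩ | hF | rfl
    · have := hone' ω f hω
      have hnp : 0 ≤ ∫ x, Real.exp (n * ω x) * f x ∂μ :=
        integral_nonneg fun x => mul_nonneg (Real.exp_pos _).le (hle x)
      linarith
    · exact hFcal f hF ⟨ω, hω⟩
    · have := hone' ω 0 hω
      simp at this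
      linarith
end

section
/- Suppose k_Q := ∫_M Q dμ ≠ 0 and that there exists u ∈ 𝒩(𝒬), not identically zero, which is pointwise non-negative on M. Then there is no ω ∈ C(M,ℝ) such that Q_ω is pointwise strictly positive everywhere, and no ω such that Q_ω is pointwise strictly negative everywhere. In particular, there is no ω ∈ C(M,ℝ) with Q_ω a constant function. (Theorem 3.5.) -/
open MeasureTheory

variable {M : Type*} [TopologicalSpace M] [MeasurableSpace M]

variable [BorelSpace M] [CompactSpace M] [ConnectedSpace M]
variable (μ : Measure M) [IsFiniteMeasure μ] [Measure.IsOpenPosMeasure μ]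
variable (n : ℝ) (P : C(M, ℝ) →ₗ[ℝ] C(M, ℝ)) (Q : C(M, ℝ))


theorem stmt15
    (hn : 0 < n)
    (hPc : ∀ c : ℝ, P (ContinuousMap.const M c) = 0)
    (hPsa : ∀ u v : C(M, ℝ), ∫ x, u x * P v x ∂μ = ∫ x, P u x * v x ∂μ)
    (hk : (∫ x, Q x ∂μ) ≠ 0)
    (u : C(M, ℝ)) (hu : u ∈ NQ μ P Q) (hne : u ≠ 0) (hpos : ∀ x, 0 ≤ u x) :
    (¬ ∃ ω : C(M, ℝ), ∀ x, 0 < Qcurv n P Q ω x) ∧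
      (¬ ∃ ω : C(M, ℝ), ∀ x, Qcurv n P Q ω x < 0) ∧
      ¬ ∃ (ω : C(M, ℝ)) (c : ℝ), Qcurv n P Q ω = ContinuousMap.const M c := by
  obtain ⟨huP, huQ⟩ := hu
  have integ : ∀ f : C(M, ℝ), Integrable (fun x => f x) μ := fun f =>
    f.continuous.integrable_of_hasCompactSupport (HasCompactSupport.of_compactSpace _)
  -- key identity: ∫ u (Q + Pω) dμ = 0
  have key : ∀ ω : C(M, ℝ), ∫ x, u x * (Q x + P ω x) ∂μ = 0 := by
    intro ω
    have h1 : (fun x => u x * (Q x + P ω x)) = fun x => (u * (Q + P ω)) x := by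
      ext x; simp [mul_add]
    have h2 : ∫ x, u x * (Q x + P ω x) ∂μ
        = (∫ x, u x * Q x ∂μ) + ∫ x, u x * P ω x ∂μ := by
      simp_rw [mul_add]
      exact integral_add (by simpa using integ (u * Q)) (by simpa using integ (u * P ω))
    rw [h2, huQ, hPsa u ω, huP]
    simp
  -- existence of a point where u is positive
  obtain ⟨x₀, hx₀⟩ : ∃ x, 0 < u x := by
    by_contra h
    push_neg at h
    exact hne (ContinuousMap.ext fun x => le_antisymm (h x) (hpos x))
  -- positivity of the candidate integral whenever Q + Pω > 0 everywhere
  have posint : ∀ ω : C(M, ℝ), (∀ x, 0 < Q x + P ω x) →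
      0 < ∫ x, u x * (Q x + P ω x) ∂μ := by
    intro ω hω
    have hnn : ∀ x, 0 ≤ u x * (Q x + P ω x) := fun x =>
      mul_nonneg (hpos x) (hω x).le
    have hint : Integrable (fun x => u x * (Q x + P ω x)) μ := by
      simpa [mul_add] using integ (u * (Q + P ω))
    rw [integral_pos_iff_support_of_nonneg hnn hint]
    have hopen : IsOpen {x | 0 < u x} := isOpen_lt continuous_const u.continuous
    have hsub : {x | 0 < u x} ⊆ Function.support fun x => u x * (Q x + P ω x) := by
      intro x hx
      exact (mul_pos hx (hω x)).ne'
    exact lt_of_lt_of_le (hopen.measure_pos μ ⟨x₀, hx₀⟩) (measure_mono hsub)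
  have hQω : ∀ (ω : C(M, ℝ)) (x : M),
      Qcurv n P Q ω x = Real.exp (-n * ω x) * (Q x + P ω x) := fun ω x => rfl
  have part1 : ¬ ∃ ω : C(M, ℝ), ∀ x, 0 < Qcurv n P Q ω x := by
    rintro ⟨ω, hω⟩
    have h : ∀ x, 0 < Q x + P ω x := by
      intro x
      have := hω x
      rw [hQω] at this
      nlinarith [Real.exp_pos (-n * ω x)]
    exact (posint ω h).ne' (key ω)
  have part2 : ¬ ∃ ω : C(M, ℝ), ∀ x, Qcurv n P Q ω x < 0 := by
    rintro ⟨ω, hω⟩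
    -- then Q + Pω < 0 everywhere, so the integral is negative
    have h : ∀ x, Q x + P ω x < 0 := by
      intro x
      have := hω x
      rw [hQω] at this
      nlinarith [Real.exp_pos (-n * ω x)]
    have hnn : ∀ x, u x * (Q x + P ω x) ≤ 0 := fun x =>
      mul_nonpos_of_nonneg_of_nonpos (hpos x) (h x).le
    have hint : Integrable (fun x => u x * (Q x + P ω x)) μ := by
      simpa [mul_add] using integ (u * (Q + P ω))
    have hneg : 0 < ∫ x, -(u x * (Q x + P ω x)) ∂μ := by
      have hnn' : ∀ x, 0 ≤ -(u x * (Q x + P ω x)) := fun x => neg_nonneg.mpr (hnn x)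
      rw [integral_pos_iff_support_of_nonneg hnn' hint.neg]
      have hopen : IsOpen {x | 0 < u x} := isOpen_lt continuous_const u.continuous
      have hsub : {x | 0 < u x} ⊆ Function.support fun x => -(u x * (Q x + P ω x)) := by
        intro x hx
        simp only [Function.mem_support, neg_ne_zero]
        exact (mul_neg_of_pos_of_neg hx (h x)).ne
      exact lt_of_lt_of_le (hopen.measure_pos μ ⟨x₀, hx₀⟩) (measure_mono hsub)
    rw [integral_neg, key ω] at hneg
    simp at hneg
  refine ⟨part1, part2, ?_⟩
  rintro ⟨ω, c, hc⟩
  -- ∫ (Q + Pω) dμ = ∫ Q dμ ≠ 0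
  have hPω0 : ∫ x, P ω x ∂μ = 0 := by
    have h1 : ∫ x, (1 : ℝ) * P ω x ∂μ = ∫ x, P (ContinuousMap.const M 1) x * ω x ∂μ :=
      hPsa (ContinuousMap.const M 1) ω
    rw [hPc 1] at h1
    simpa using h1
  have hsum : ∫ x, (Q x + P ω x) ∂μ = ∫ x, Q x ∂μ := by
    rw [integral_add (integ Q) (integ (P ω)), hPω0, add_zero]
  have hcex : ∀ x : M, Q x + P ω x = c * Real.exp (n * ω x) := by
    intro x
    have hx := congrFun (congrArg DFunLike.coe hc) x
    rw [hQω] at hx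
    have he : Real.exp (-n * ω x) ≠ 0 := (Real.exp_pos _).ne'
    have : Real.exp (-n * ω x) * Real.exp (n * ω x) = 1 := by
      rw [← Real.exp_add]; ring_nf; exact Real.exp_zero
    simp only [ContinuousMap.const_apply] at hx
    linear_combination Real.exp (n * ω x) * hx - (Q x + P ω x) * this
  rcases lt_trichotomy c 0 with hc0 | hc0 | hc0
  · exact part2 ⟨ω, fun x => by rw [hc]; simpa using hc0⟩
  · apply hk
    rw [← hsum]
    have : ∀ x : M, Q x + P ω x = 0 := fun x => by
      rw [hcex x, hc0, zero_mul]
    simp [this]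
  · exact part1 ⟨ω, fun x => by rw [hc]; simpa using hc0⟩
end
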